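/- Let A be a trim unambiguous NFA. Then A is not positively resolvable if and only if there exist a state q, a letter a, words x, z ∈ Σ* and y ∈ Σ+ with both y and z beginning with the letter a, and states q' ≠ q'' with (q, a, q') ∈ Δ and (q, a, q'') ∈ Δ, such that: q ∈ δ(q0, x); there is a run from q back to q on y whose first transition is (q, a, q'); and there is a run from q on z whose first transition is (q, a, q'') and which ends in an accepting state (so xyz ∈ L(A), and the transition taken when reading y from q is nondeterministic). -/

import Mathlib

open scoped BigOperators

/-- A nondeterministic finite automaton over alphabet `σ` with states `Q`:
an initial state, a finite set of transitions and a finite set of accepting states. -/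
structure NFA' (σ Q : Type) where
  init : Q
  trans : Finset (Q × σ × Q)
  accept : Finset Q

namespace NFA'

variable {σ Q : Type}

/-- `IsRun Δ p w ts r`: `ts` is a run on the word `w` from state `p` to state `r`,
using transitions from `Δ`. -/
inductive IsRun (Δ : Finset (Q × σ × Q)) : Q → List σ → List (Q × σ × Q) → Q → Prop
  | nil (q : Q) : IsRun Δ q [] [] q
  | cons {p : Q} {a : σ} {q r : Q} {w : List σ} {ts : List (Q × σ × Q)} :
      (p, a, q) ∈ Δ → IsRun Δ q w ts r → IsRun Δ p (a :: w) ((p, a, q) :: ts) r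

/-- `ts` is an accepting run of `A` on `w`. -/
def AccRun (A : NFA' σ Q) (w : List σ) (ts : List (Q × σ × Q)) : Prop :=
  ∃ r ∈ A.accept, IsRun A.trans A.init w ts r

/-- The language of `A`: words admitting an accepting run. -/
def lang (A : NFA' σ Q) : Set (List σ) := {w | ∃ ts, A.AccRun w ts}

/-- `δ(q, u)`: the set of states reachable from `q` by a run on `u`. -/
def reach (A : NFA' σ Q) (q : Q) (u : List σ) : Set Q :=
  {r | ∃ ts, IsRun A.trans q u ts r}

/-- The word `u` admits an accepting run from the state `q`. -/
def AccFrom (A : NFA' σ Q) (q : Q) (u : List σ) : Prop :=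
  ∃ r ∈ A.accept, ∃ ts, IsRun A.trans q u ts r

/-- `A_S`: the automaton `A` with transitions restricted to `S`. -/
def restrict (A : NFA' σ Q) (S : Finset (Q × σ × Q)) : NFA' σ Q :=
  { A with trans := S }

/-- `A` is `k`-ambiguous: every word has at most `k` accepting runs. -/
def kAmbiguous (A : NFA' σ Q) (k : ℕ) : Prop :=
  ∀ w, {ts | A.AccRun w ts}.encard ≤ (k : ℕ∞)

/-- `A` is finitely-ambiguous. -/
def FinitelyAmbiguous (A : NFA' σ Q) : Prop := ∃ k : ℕ, 0 < k ∧ A.kAmbiguous k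

/-- A memoryless stochastic resolver for `A`: probabilities, supported on the transitions
of `A`, summing to one over the outgoing transitions of every pair `(p, a)` that has at
least one outgoing transition (implicitly, `A` is completed with a non-accepting sink). -/
structure Resolver (A : NFA' σ Q) where
  r : Q × σ × Q → ℝ
  nonneg : ∀ t, 0 ≤ r t
  le_one : ∀ t, r t ≤ 1
  supp : ∀ t, r t ≠ 0 → t ∈ A.trans
  sum_one : ∀ p a, (∃ q, (p, a, q) ∈ A.trans) →
      ∑ t ∈ A.trans, {t : Q × σ × Q | t.1 = p ∧ t.2.1 = a}.indicator r t = 1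

/-- The probability of a run: the product of the probabilities of its transitions. -/
def runProb (f : Q × σ × Q → ℝ) (ts : List (Q × σ × Q)) : ℝ := (ts.map f).prod

/-- The acceptance probability of a word: the sum, over all accepting runs, of the
product of the transition probabilities along the run. -/
noncomputable def accProb (A : NFA' σ Q) (f : Q × σ × Q → ℝ) (w : List σ) : ℝ :=
  ∑ᶠ ts ∈ {ts | A.AccRun w ts}, runProb f ts

/-- `A` is `λ`-memoryless-stochastically-resolvable. -/
def Resolvable (A : NFA' σ Q) (lam : ℝ) : Prop :=
  ∃ R : A.Resolver, {w | lam ≤ A.accProb R.r w} = A.lang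

/-- `A` is positively (memoryless stochastically) resolvable. -/
def PositivelyResolvable (A : NFA' σ Q) : Prop :=
  ∃ lam : ℝ, 0 < lam ∧ A.Resolvable lam

/-- The support `S` is bad: no resolver whose support is exactly `S` witnesses
positive resolvability. -/
def BadSupport (A : NFA' σ Q) (S : Finset (Q × σ × Q)) : Prop :=
  ∀ R : A.Resolver, (∀ t, R.r t ≠ 0 ↔ t ∈ S) →
    ∀ lam : ℝ, 0 < lam → {w | lam ≤ A.accProb R.r w} ≠ A.lang

/-- A transition is nondeterministic in `S`. -/
def NondetIn (S : Finset (Q × σ × Q)) (t : Q × σ × Q) : Prop :=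
  t ∈ S ∧ ∃ q', q' ≠ t.2.2 ∧ (t.1, t.2.1, q') ∈ S

/-- The number of transitions of a run that are nondeterministic in `S`. -/
noncomputable def nondetCount (S : Finset (Q × σ × Q)) (ts : List (Q × σ × Q)) : ℕ :=
  (ts.map (Set.indicator {t | NondetIn S t} (fun _ => 1))).sum

/-- `b(w)`: the minimal number of `S`-nondeterministic transitions over all accepting
runs of `w` in `A_S`. -/
noncomputable def minNondet (A : NFA' σ Q) (S : Finset (Q × σ × Q)) (w : List σ) : ℕ :=
  sInf {m | ∃ ts, (A.restrict S).AccRun w ts ∧ nondetCount S ts = m}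

/-- The state of a run `ts` (started in `q0`) after `n` transitions. -/
def stateAt (q0 : Q) (ts : List (Q × σ × Q)) (n : ℕ) : Q :=
  match (ts.take n).getLast? with
  | some t => t.2.2
  | none => q0

/-- `Θ` makes `A` into a probabilistic finite automaton (PFA) based on `A`. -/
def IsPFA (A : NFA' σ Q) (Θ : Q × σ × Q → ℝ) : Prop :=
  (∀ t ∈ A.trans, 0 < Θ t ∧ Θ t ≤ 1) ∧ (∀ t, t ∉ A.trans → Θ t = 0) ∧
  ∀ p a, (∃ q, (p, a, q) ∈ A.trans) →
    ∑ t ∈ A.trans, {t : Q × σ × Q | t.1 = p ∧ t.2.1 = a}.indicator Θ t = 1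

/-- The PFA is simple: every transition has probability `1/2` or `1`. -/
def IsSimple (A : NFA' σ Q) (Θ : Q × σ × Q → ℝ) : Prop :=
  ∀ t ∈ A.trans, Θ t = 1/2 ∨ Θ t = 1

end NFA'

open NFA'

/-!
If `A` has a reachable loop on `q` whose first transition `(q, a, q')` has an alternative
`(q, a, q'')` leading to acceptance, then under any resolver `R` the unique accepting runs of
`x yⁿ z` have probability at most `R(q, a, q')ⁿ R(q, a, q'')`; as the two probabilities sum to
at most one, this tends to `0` (or is `0` already), so no threshold `λ > 0` works.

Conversely, without such a loop no state is the source of two nondeterministic transitions of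
one run from the initial state, so a run takes at most `|Δ|` nondeterministic transitions. The
uniform resolver then gives every accepting run, hence (by unambiguity) every word of `L(A)`,
probability at least `(|Δ| + 1)⁻¹ ^ |Δ|`, while words outside `L(A)` have probability `0`.
-/

namespace NFA'

variable {σ Q : Type}

section Runs

variable {Δ : Finset (Q × σ × Q)}

theorem IsRun.mem_trans {p r : Q} {w : List σ} {ts : List (Q × σ × Q)}
    (h : IsRun Δ p w ts r) : ∀ t ∈ ts, t ∈ Δ := by
  induction h with
  | nil => simp
  | cons ht _ ih => exact List.forall_mem_cons.2 ⟨ht, ih⟩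

theorem IsRun.append {p m r : Q} {w₁ w₂ : List σ} {ts₁ ts₂ : List (Q × σ × Q)}
    (h₁ : IsRun Δ p w₁ ts₁ m) (h₂ : IsRun Δ m w₂ ts₂ r) :
    IsRun Δ p (w₁ ++ w₂) (ts₁ ++ ts₂) r := by
  induction h₁ with
  | nil => simpa
  | cons ht _ ih => exact .cons ht (ih h₂)

theorem IsRun.of_cons {p r : Q} {w : List σ} {t : Q × σ × Q} {ts : List (Q × σ × Q)}
    (h : IsRun Δ p w (t :: ts) r) :
    p = t.1 ∧ t ∈ Δ ∧ ∃ w', w = t.2.1 :: w' ∧ IsRun Δ t.2.2 w' ts r := by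
  cases h with
  | cons ht h' => exact ⟨rfl, ht, _, rfl, h'⟩

theorem IsRun.of_append {p r : Q} {w : List σ} {ts₁ ts₂ : List (Q × σ × Q)}
    (h : IsRun Δ p w (ts₁ ++ ts₂) r) :
    ∃ m w₁ w₂, w = w₁ ++ w₂ ∧ IsRun Δ p w₁ ts₁ m ∧ IsRun Δ m w₂ ts₂ r := by
  induction ts₁ generalizing p w with
  | nil => exact ⟨p, [], w, rfl, .nil p, h⟩
  | cons t ts₁ ih =>
    obtain ⟨rfl, ht, w', rfl, h'⟩ := h.of_cons
    obtain ⟨m, w₁, w₂, rfl, h₁, h₂⟩ := ih h'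
    exact ⟨m, t.2.1 :: w₁, w₂, rfl, .cons ht h₁, h₂⟩

theorem IsRun.replicate {q : Q} {w : List σ} {ts : List (Q × σ × Q)}
    (h : IsRun Δ q w ts q) (n : ℕ) :
    IsRun Δ q (List.replicate n w).flatten (List.replicate n ts).flatten q := by
  induction n with
  | zero => exact .nil q
  | succ n ih => simpa [List.replicate_succ] using h.append ih

end Runs

theorem mem_reach_append_singleton {A : NFA' σ Q} {q p r : Q} {x : List σ} {a : σ}
    (hp : p ∈ A.reach q x) (ht : (p, a, r) ∈ A.trans) : r ∈ A.reach q (x ++ [a]) := by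
  obtain ⟨ts, h⟩ := hp
  exact ⟨ts ++ [(p, a, r)], h.append (.cons ht (.nil r))⟩

section RunProb

variable {f : Q × σ × Q → ℝ}

theorem runProb_cons (t : Q × σ × Q) (ts : List (Q × σ × Q)) :
    runProb f (t :: ts) = f t * runProb f ts := by
  simp [runProb]

theorem runProb_append (ts₁ ts₂ : List (Q × σ × Q)) :
    runProb f (ts₁ ++ ts₂) = runProb f ts₁ * runProb f ts₂ := by
  simp [runProb]

theorem runProb_flatten_replicate (n : ℕ) (ts : List (Q × σ × Q)) :
    runProb f (List.replicate n ts).flatten = runProb f ts ^ n := by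
  induction n with
  | zero => simp [runProb]
  | succ n ih => rw [List.replicate_succ, List.flatten_cons, runProb_append, ih, pow_succ']

theorem runProb_nonneg (h₀ : ∀ t, 0 ≤ f t) (ts : List (Q × σ × Q)) : 0 ≤ runProb f ts :=
  List.prod_nonneg fun _ hx => by
    obtain ⟨t, -, rfl⟩ := List.mem_map.1 hx
    exact h₀ t

theorem runProb_le_one (h₀ : ∀ t, 0 ≤ f t) (h₁ : ∀ t, f t ≤ 1) (ts : List (Q × σ × Q)) :
    runProb f ts ≤ 1 := by
  induction ts with
  | nil => simp [runProb]
  | cons t ts ih => rw [runProb_cons]; exact mul_le_one₀ (h₁ t) (runProb_nonneg h₀ ts) ih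

theorem runProb_le_of_head?_eq (h₀ : ∀ t, 0 ≤ f t) (h₁ : ∀ t, f t ≤ 1)
    {ts : List (Q × σ × Q)} {t : Q × σ × Q} (h : ts.head? = some t) :
    runProb f ts ≤ f t := by
  obtain ⟨ts, rfl⟩ : ∃ ts', ts = t :: ts' := List.head?_eq_some_iff.1 h
  rw [runProb_cons]
  exact mul_le_of_le_one_right (h₀ t) (runProb_le_one h₀ h₁ ts)

theorem pow_countP_le_runProb (p : Q × σ × Q → Bool) {B : ℝ} (hB : 0 ≤ B)
    {ts : List (Q × σ × Q)} (h₁ : ∀ t ∈ ts, p t = false → f t = 1)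
    (hB_le : ∀ t ∈ ts, p t → B ≤ f t) : B ^ ts.countP p ≤ runProb f ts := by
  induction ts with
  | nil => simp [runProb]
  | cons t ts ih =>
    simp only [List.forall_mem_cons] at h₁ hB_le
    rw [runProb_cons, List.countP_cons]
    cases hp : p t
    · rw [h₁.1 hp, if_neg (by simp), add_zero, one_mul]
      exact ih h₁.2 hB_le.2
    · rw [if_pos rfl, pow_succ']
      exact mul_le_mul (hB_le.1 hp) (ih h₁.2 hB_le.2) (pow_nonneg hB _) (hB.trans (hB_le.1 hp))

end RunProb

theorem accProb_eq_runProb {A : NFA' σ Q} (hunamb : A.kAmbiguous 1)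
    (f : Q × σ × Q → ℝ) {w : List σ} {ts : List (Q × σ × Q)} (h : A.AccRun w ts) :
    A.accProb f w = runProb f ts := by
  have hone : {ts' | A.AccRun w ts'} = {ts} :=
    Set.eq_singleton_iff_unique_mem.2
      ⟨h, fun ts' h' => Set.encard_le_one_iff.1 (by simpa using hunamb w) _ _ h' h⟩
  rw [accProb, hone, finsum_mem_singleton]

theorem accProb_eq_zero {A : NFA' σ Q} (f : Q × σ × Q → ℝ) {w : List σ}
    (h : w ∉ A.lang) : A.accProb f w = 0 := by
  have hempty : {ts | A.AccRun w ts} = ∅ :=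
    Set.eq_empty_iff_forall_notMem.2 fun ts hts => h ⟨ts, hts⟩
  rw [accProb, hempty, finsum_mem_empty]

open Classical in
theorem sum_indicator_outgoing (A : NFA' σ Q) (f : Q × σ × Q → ℝ) (p : Q) (a : σ) :
    ∑ t ∈ A.trans, {t : Q × σ × Q | t.1 = p ∧ t.2.1 = a}.indicator f t =
      ∑ t ∈ A.trans with t.1 = p ∧ t.2.1 = a, f t := by
  rw [Finset.sum_filter]
  simp only [Set.indicator_apply, Set.mem_ofPred_eq]

open Classical in
theorem Resolver.sum_filter_eq_one {A : NFA' σ Q} (R : A.Resolver) {p : Q} {a : σ}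
    (h : ∃ q, (p, a, q) ∈ A.trans) :
    ∑ t ∈ A.trans with t.1 = p ∧ t.2.1 = a, R.r t = 1 := by
  rw [← R.sum_one p a h, sum_indicator_outgoing]

open Classical in
theorem Resolver.add_le_one {A : NFA' σ Q} (R : A.Resolver) {p q' q'' : Q} {a : σ}
    (hne : q' ≠ q'') (h' : (p, a, q') ∈ A.trans) (h'' : (p, a, q'') ∈ A.trans) :
    R.r (p, a, q') + R.r (p, a, q'') ≤ 1 := by
  have hpair : ((p, a, q') : Q × σ × Q) ≠ (p, a, q'') := by simpa using hne
  rw [← Finset.sum_pair hpair, ← R.sum_filter_eq_one ⟨q', h'⟩]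
  refine Finset.sum_le_sum_of_subset_of_nonneg ?_ fun t _ _ => R.nonneg t
  simp [Finset.insert_subset_iff, h', h'']

theorem not_forall_le_pow_mul {a b lam : ℝ} (ha : 0 ≤ a) (hab : a + b ≤ 1)
    (hlam : 0 < lam) : ¬ ∀ n : ℕ, lam ≤ a ^ n * b := by
  intro h
  have ha1 : a < 1 := by linarith [h 0, pow_zero a]
  obtain ⟨n, hn⟩ := exists_pow_lt_of_lt_one hlam ha1
  have : a ^ n * b ≤ a ^ n := mul_le_of_le_one_right (pow_nonneg ha n) (by linarith)
  linarith [h n]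

def NondetLoopWitness (A : NFA' σ Q) : Prop :=
  ∃ (q q' q'' : Q) (a : σ) (x y z : List σ),
    q' ≠ q'' ∧ (q, a, q') ∈ A.trans ∧ (q, a, q'') ∈ A.trans ∧
    y ≠ [] ∧ y.head? = some a ∧ z.head? = some a ∧
    q ∈ A.reach A.init x ∧
    (∃ ts, IsRun A.trans q y ts q ∧ ts.head? = some (q, a, q')) ∧
    (∃ ts r, IsRun A.trans q z ts r ∧ r ∈ A.accept ∧ ts.head? = some (q, a, q''))

theorem not_positivelyResolvable_of_nondetLoopWitness {A : NFA' σ Q}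
    (hunamb : A.kAmbiguous 1) (hW : A.NondetLoopWitness) : ¬ A.PositivelyResolvable := by
  obtain ⟨q, q', q'', a, x, y, z, hne, h', h'', -, -, -, ⟨tsx, hx⟩, ⟨tsy, hy, hy_head⟩,
    ⟨tsz, r, hz, hr, hz_head⟩⟩ := hW
  rintro ⟨lam, hlam, R, hR⟩
  refine not_forall_le_pow_mul (R.nonneg _) (R.add_le_one hne h' h'') hlam fun n => ?_
  have hacc : A.AccRun (x ++ ((List.replicate n y).flatten ++ z))
      (tsx ++ ((List.replicate n tsy).flatten ++ tsz)) :=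
    ⟨r, hr, hx.append ((hy.replicate n).append hz)⟩
  have hle : lam ≤ A.accProb R.r _ := (Set.ext_iff.1 hR _).2 ⟨_, hacc⟩
  rw [accProb_eq_runProb hunamb R.r hacc, runProb_append, runProb_append,
    runProb_flatten_replicate] at hle
  have hx_le := runProb_le_one R.nonneg R.le_one tsx
  have hy_le := runProb_le_of_head?_eq R.nonneg R.le_one hy_head
  have hz_le := runProb_le_of_head?_eq R.nonneg R.le_one hz_head
  have hy_nonneg := runProb_nonneg R.nonneg tsy
  have hz_nonneg := runProb_nonneg R.nonneg tsz
  have hpow_nonneg := pow_nonneg (R.nonneg (q, a, q')) n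
  calc lam ≤ runProb R.r tsx * (runProb R.r tsy ^ n * runProb R.r tsz) := hle
    _ ≤ 1 * (R.r (q, a, q') ^ n * R.r (q, a, q'')) := by gcongr
    _ = R.r (q, a, q') ^ n * R.r (q, a, q'') := one_mul _

open Classical in
theorem nodup_nondetIn_sources {A : NFA' σ Q}
    (htrim : ∀ q : Q, ∃ z, A.AccFrom q z) (hW : ¬ A.NondetLoopWitness)
    {p r : Q} {w : List σ} {ts : List (Q × σ × Q)}
    (hp : ∃ x, p ∈ A.reach A.init x) (h : IsRun A.trans p w ts r) :
    ((ts.filter (NondetIn A.trans ·)).map Prod.fst).Nodup := by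
  induction h with
  | nil => simp
  | cons ht h ih =>
    rename_i p a q r w ts
    obtain ⟨x, hx⟩ := hp
    refine List.filter_cons ▸ ?_
    split_ifs with hnd
    -- a later transition from the same source closes a loop through the nondeterministic
    -- transition; trimness continues its alternative successor to acceptance
    · refine List.nodup_cons.2
        ⟨fun hmem => hW ?_, ih ⟨_, mem_reach_append_singleton hx ht⟩⟩
      obtain ⟨-, q'', hq'', ht''⟩ := of_decide_eq_true hnd
      obtain ⟨t', ht', rfl⟩ := List.mem_map.1 hmem
      obtain ⟨u, v, rfl⟩ := List.append_of_mem (List.mem_of_mem_filter ht')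
      obtain ⟨m, w₁, w₂, -, hu, hv⟩ := h.of_append
      obtain ⟨rfl, -⟩ := hv.of_cons
      obtain ⟨z, r', hr', tsz, hz⟩ := htrim q''
      exact ⟨t'.1, q, q'', a, x, a :: w₁, a :: z, hq''.symm, ht, ht'', List.cons_ne_nil _ _,
        rfl, rfl, hx, ⟨_, .cons ht hu, rfl⟩, ⟨_, r', .cons ht'' hz, hr', rfl⟩⟩
    · exact ih ⟨_, mem_reach_append_singleton hx ht⟩

open Classical in
theorem countP_nondetIn_le_card {A : NFA' σ Q}
    (htrim : ∀ q : Q, ∃ z, A.AccFrom q z) (hW : ¬ A.NondetLoopWitness)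
    {w : List σ} {ts : List (Q × σ × Q)} (h : A.AccRun w ts) :
    ts.countP (NondetIn A.trans ·) ≤ A.trans.card := by
  obtain ⟨r, -, hrun⟩ := h
  have hnodup := nodup_nondetIn_sources htrim hW ⟨[], [], .nil _⟩ hrun
  have hsub : ((ts.filter (NondetIn A.trans ·)).map Prod.fst).toFinset ⊆
      A.trans.image Prod.fst := by
    intro p hp
    obtain ⟨t, ht, rfl⟩ := List.mem_map.1 (List.mem_toFinset.1 hp)
    exact Finset.mem_image_of_mem _ (hrun.mem_trans t (List.mem_of_mem_filter ht))
  calc ts.countP (NondetIn A.trans ·)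
      = ((ts.filter (NondetIn A.trans ·)).map Prod.fst).toFinset.card := by
        rw [List.toFinset_card_of_nodup hnodup, List.length_map, List.countP_eq_length_filter]
    _ ≤ (A.trans.image Prod.fst).card := Finset.card_le_card hsub
    _ ≤ A.trans.card := Finset.card_image_le

open Classical in
noncomputable def outDegree (A : NFA' σ Q) (p : Q) (a : σ) : ℕ :=
  {t ∈ A.trans | t.1 = p ∧ t.2.1 = a}.card

open Classical in
theorem one_le_outDegree {A : NFA' σ Q} {t : Q × σ × Q} (ht : t ∈ A.trans) :
    1 ≤ A.outDegree t.1 t.2.1 :=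
  Finset.card_pos.2 ⟨t, Finset.mem_filter.2 ⟨ht, rfl, rfl⟩⟩

open Classical in
theorem outDegree_le_card (A : NFA' σ Q) (p : Q) (a : σ) : A.outDegree p a ≤ A.trans.card :=
  Finset.card_filter_le _ _

open Classical in
theorem outDegree_eq_one {A : NFA' σ Q} {t : Q × σ × Q} (ht : t ∈ A.trans)
    (hdet : ¬ NondetIn A.trans t) : A.outDegree t.1 t.2.1 = 1 := by
  refine Finset.card_eq_one.2 ⟨t, Finset.eq_singleton_iff_unique_mem.2
    ⟨Finset.mem_filter.2 ⟨ht, rfl, rfl⟩, fun u hu => ?_⟩⟩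
  obtain ⟨hu_mem, h₁, h₂⟩ := Finset.mem_filter.1 hu
  obtain ⟨p, a, q⟩ := t
  obtain ⟨p', a', q'⟩ := u
  simp only at h₁ h₂
  subst h₁ h₂
  by_contra hne
  exact hdet ⟨ht, q', by simpa using hne, hu_mem⟩

open Classical in
noncomputable def uniformResolver (A : NFA' σ Q) : A.Resolver where
  r t := if t ∈ A.trans then (A.outDegree t.1 t.2.1 : ℝ)⁻¹ else 0
  nonneg t := by split_ifs <;> positivity
  le_one t := by
    split_ifs with ht
    · exact inv_le_one_of_one_le₀ (by exact_mod_cast one_le_outDegree ht)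
    · exact zero_le_one
  supp t h := by
    by_contra ht
    exact h (if_neg ht)
  sum_one p a := by
    rintro ⟨q, hq⟩
    have hpos : (0 : ℝ) < A.outDegree p a := by exact_mod_cast one_le_outDegree hq
    calc _ = ∑ t ∈ A.trans with t.1 = p ∧ t.2.1 = a, (A.outDegree p a : ℝ)⁻¹ := by
          rw [sum_indicator_outgoing]
          refine Finset.sum_congr rfl fun t ht => ?_
          obtain ⟨ht_mem, rfl, rfl⟩ := Finset.mem_filter.1 ht
          exact if_pos ht_mem
      _ = 1 := by
          rw [Finset.sum_const, nsmul_eq_mul]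
          exact mul_inv_cancel₀ hpos.ne'

theorem uniformResolver_r_eq_one {A : NFA' σ Q} {t : Q × σ × Q} (ht : t ∈ A.trans)
    (hdet : ¬ NondetIn A.trans t) : A.uniformResolver.r t = 1 := by
  simp [uniformResolver, ht, outDegree_eq_one ht hdet]

theorem inv_card_add_one_le_uniformResolver_r {A : NFA' σ Q} {t : Q × σ × Q}
    (ht : t ∈ A.trans) : ((A.trans.card : ℝ) + 1)⁻¹ ≤ A.uniformResolver.r t := by
  have h₁ : (1 : ℝ) ≤ A.outDegree t.1 t.2.1 := by exact_mod_cast one_le_outDegree ht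
  have h₂ : (A.outDegree t.1 t.2.1 : ℝ) ≤ A.trans.card := by
    exact_mod_cast outDegree_le_card A t.1 t.2.1
  simp only [uniformResolver, if_pos ht]
  exact inv_anti₀ (by linarith) (by linarith)

theorem positivelyResolvable_of_not_nondetLoopWitness {A : NFA' σ Q}
    (hunamb : A.kAmbiguous 1) (htrim : ∀ q : Q, ∃ z, A.AccFrom q z)
    (hW : ¬ A.NondetLoopWitness) : A.PositivelyResolvable := by
  classical
  set B : ℝ := ((A.trans.card : ℝ) + 1)⁻¹
  have hB₀ : 0 < B := by positivity
  have hB₁ : B ≤ 1 :=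
    inv_le_one_of_one_le₀ (by linarith [(A.trans.card).cast_nonneg (α := ℝ)])
  refine ⟨B ^ A.trans.card, pow_pos hB₀ _, A.uniformResolver,
    Set.ext fun w => ⟨fun hw => ?_, ?_⟩⟩
  · by_contra hwL
    rw [Set.mem_ofPred_eq, accProb_eq_zero _ hwL] at hw
    exact (pow_pos hB₀ _).not_ge hw
  · rintro ⟨ts, hacc⟩
    obtain ⟨_, -, hrun⟩ := id hacc
    rw [Set.mem_ofPred_eq, accProb_eq_runProb hunamb _ hacc]
    calc B ^ A.trans.card ≤ B ^ ts.countP (NondetIn A.trans ·) :=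
          pow_le_pow_of_le_one hB₀.le hB₁ (countP_nondetIn_le_card htrim hW hacc)
      _ ≤ runProb A.uniformResolver.r ts :=
          pow_countP_le_runProb _ hB₀.le
            (fun t ht hdet => uniformResolver_r_eq_one (hrun.mem_trans t ht) (by simpa using hdet))
            (fun t ht _ => inv_card_add_one_le_uniformResolver_r (hrun.mem_trans t ht))

end NFA'

/-- A trim unambiguous NFA is not positively resolvable iff it has a witness word
`xyz` where `y` loops on a state `q`, starts with a nondeterministic transition
`(q, a, q')`, and `z` continues from `q` with the alternative transition `(q, a, q'')`
to an accepting state. -/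
theorem stmt9 {σ Q : Type} (A : NFA' σ Q)
    (hunamb : A.kAmbiguous 1)
    (htrim : ∀ q : Q, (∃ x, q ∈ A.reach A.init x) ∧ ∃ z, A.AccFrom q z) :
    ¬ A.PositivelyResolvable ↔
      ∃ (q q' q'' : Q) (a : σ) (x y z : List σ),
        q' ≠ q'' ∧ (q, a, q') ∈ A.trans ∧ (q, a, q'') ∈ A.trans ∧
        y ≠ [] ∧ y.head? = some a ∧ z.head? = some a ∧
        q ∈ A.reach A.init x ∧
        (∃ ts, IsRun A.trans q y ts q ∧ ts.head? = some (q, a, q')) ∧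
        (∃ ts r, IsRun A.trans q z ts r ∧ r ∈ A.accept ∧ ts.head? = some (q, a, q'')) :=
  ⟨fun hnot => not_not.1 fun hW =>
      hnot (positivelyResolvable_of_not_nondetLoopWitness hunamb (fun q => (htrim q).2) hW),
    not_positivelyResolvable_of_nondetLoopWitness hunamb⟩
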